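/- Any existential rule whose head has k pieces with respect to its existential variables is logically equivalent to the conjunction of the k single-piece rules obtained by restricting the head to each piece (keeping the same body and existentially quantifying only the existential variables occurring in that piece). -/

import Mathlib

open scoped Classical
noncomputable section

namespace ER

/-- Terms: constants or variables (variables occurring in instances are called nulls). -/
inductive Term where
  | const : ℕ → Term
  | var : ℕ → Term
deriving DecidableEq

def Term.isConst : Term → Prop
  | .const _ => True
  | .var _ => False

/-- An atom `p(t₁,…,tₙ)`. -/
structure Atom where
  pred : ℕ
  args : List Term
deriving DecidableEq

def Atom.terms (a : Atom) : Set Term := {t | t ∈ a.args}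
def Atom.vars (a : Atom) : Set ℕ := {v | Term.var v ∈ a.args}

def termsOf (S : Set Atom) : Set Term := ⋃ a ∈ S, a.terms
def varsOf (S : Set Atom) : Set ℕ := ⋃ a ∈ S, a.vars
/-- The nulls (non-constant terms) occurring in a set of atoms. -/
def nullsOf (S : Set Atom) : Set Term := {t | t ∈ termsOf S ∧ ¬ t.isConst}

def Term.subst (σ : ℕ → Term) : Term → Term
  | .const c => .const c
  | .var v => σ v

def Atom.subst (σ : ℕ → Term) (a : Atom) : Atom := ⟨a.pred, a.args.map (Term.subst σ)⟩
def substSet (σ : ℕ → Term) (S : Set Atom) : Set Atom := (Atom.subst σ) '' S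

/-- A homomorphism from `S1` to `S2`: a substitution of variables by terms mapping `S1` into `S2`. -/
def isHom (σ : ℕ → Term) (S1 S2 : Set Atom) : Prop := substSet σ S1 ⊆ S2

/-- An injective homomorphism (injective on the terms of the source). -/
def isInjHom (σ : ℕ → Term) (S1 S2 : Set Atom) : Prop :=
  isHom σ S1 S2 ∧ Set.InjOn (Term.subst σ) (termsOf S1)

/-- An instance is a finite set of ground atoms. -/
def IsInstance (I : Set Atom) : Prop := I.Finite ∧ ∀ t ∈ termsOf I, t.isConst

/-- An existential rule, given by its body and head. -/
structure Rule where
  body : Set Atom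
  head : Set Atom

def Rule.frontier (R : Rule) : Set ℕ := varsOf R.body ∩ varsOf R.head
def Rule.exist (R : Rule) : Set ℕ := varsOf R.head \ varsOf R.body

/-- Well-formed rule: finite non-empty body and head, no constants. -/
def WfRule (R : Rule) : Prop :=
  R.body.Finite ∧ R.head.Finite ∧ R.body.Nonempty ∧ R.head.Nonempty ∧
  ∀ t ∈ termsOf (R.body ∪ R.head), ¬ t.isConst

def WfList (L : List Rule) : Prop := ∀ R ∈ L, WfRule R

/-- Restriction of a substitution to a set of variables (default value elsewhere). -/
def restrict (f : ℕ → Term) (F : Set ℕ) : ℕ → Term :=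
  fun v => if v ∈ F then f v else Term.const 0

/-- A semi-oblivious naming of nulls for the rules of `L`: the null created for an
existential variable depends only on the rule and the restriction of the trigger to the
frontier, and distinct such data yield distinct nulls. -/
def SONaming (L : List Rule) (ν : Rule → (ℕ → Term) → ℕ → ℕ) : Prop :=
  (∀ R ∈ L, ∀ f g : ℕ → Term,
      restrict f R.frontier = restrict g R.frontier → ν R f = ν R g) ∧
  (∀ R ∈ L, ∀ R' ∈ L, ∀ f f' x x', ν R f x = ν R' f' x' →
      R = R' ∧ restrict f R.frontier = restrict f' R'.frontier ∧ x = x')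

/-- The safe extension of a trigger `π`, replacing each existential variable by its null. -/
def safeSub (ν : Rule → (ℕ → Term) → ℕ → ℕ) (R : Rule) (π : ℕ → Term) : ℕ → Term :=
  fun y => if y ∈ R.exist then Term.var (ν R (restrict π R.frontier) y) else π y

/-- One breadth-first semi-oblivious chase step. -/
def chaseStep (ν : Rule → (ℕ → Term) → ℕ → ℕ) (L : List Rule) (S : Set Atom) : Set Atom :=
  S ∪ {a | ∃ R ∈ L, ∃ π : ℕ → Term, isHom π R.body S ∧ a ∈ substSet (safeSub ν R π) R.head}

/-- The breadth-first semi-oblivious chase. -/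
def chaseF (ν : Rule → (ℕ → Term) → ℕ → ℕ) (L : List Rule) (I : Set Atom) : ℕ → Set Atom
  | 0 => I
  | k + 1 => chaseStep ν L (chaseF ν L I k)

def chaseInf (ν : Rule → (ℕ → Term) → ℕ → ℕ) (L : List Rule) (I : Set Atom) : Set Atom :=
  ⋃ k, chaseF ν L I k

/-- `L'` parallelises `L`. -/
def Parallelises (L' L : List Rule) : Prop :=
  ∀ ν ν', SONaming L ν → SONaming L' ν' → ∀ I, IsInstance I →
    (∃ σ, isInjHom σ (chaseInf ν L I) (chaseF ν' L' I 1)) ∧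
    (∃ σ, isHom σ (chaseF ν' L' I 1) (chaseInf ν L I))

def Parallelisable (L : List Rule) : Prop := ∃ L', WfList L' ∧ Parallelises L' L

/-- Boundedness of the semi-oblivious chase, uniformly over all instances. -/
def Bounded (L : List Rule) : Prop :=
  ∃ k, ∀ ν, SONaming L ν → ∀ I, IsInstance I → chaseF ν L I k = chaseInf ν L I

def ChaseFinite (L : List Rule) : Prop :=
  ∀ ν, SONaming L ν → ∀ I, IsInstance I → ∃ k, chaseF ν L I k = chaseInf ν L I

/-- Two atoms are `T`-linked if they share a term of `T`. -/
def linked (T : Set Term) (a b : Atom) : Prop := ∃ t ∈ T, t ∈ a.terms ∧ t ∈ b.terms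

/-- Connectivity in `S` by a path of atoms where consecutive atoms share a term of `T`. -/
def connectedIn (S : Set Atom) (T : Set Term) (a b : Atom) : Prop :=
  a ∈ S ∧ b ∈ S ∧ Relation.ReflTransGen (fun x y => x ∈ S ∧ y ∈ S ∧ linked T x y) a b

/-- `P` is closed in `S` w.r.t. `T`-linkedness. -/
def closedIn (S : Set Atom) (T : Set Term) (P : Set Atom) : Prop :=
  ∀ a ∈ S, ∀ b ∈ P, linked T a b → a ∈ P

/-- A piece of `S` w.r.t. `T`: a non-empty subset closed under `T`-linkedness and minimal such. -/
def IsPiece (S : Set Atom) (T : Set Term) (P : Set Atom) : Prop :=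
  P.Nonempty ∧ P ⊆ S ∧ closedIn S T P ∧
  ∀ P', P' ⊆ P → P'.Nonempty → closedIn S T P' → P' = P

/-- A single-piece rule: its head is a piece of itself w.r.t. its existential variables. -/
def SinglePiece (R : Rule) : Prop := IsPiece R.head (Term.var '' R.exist) R.head

/-- The rule used at step `k` of a derivation. -/
def ruleAt (L : List Rule) (r : ℕ → ℕ) (k : ℕ) : Rule := L.getD (r k) ⟨∅, ∅⟩

/-- The set of atoms produced by the `k`-th rule application of a derivation. -/
def producedAt (ν : Rule → (ℕ → Term) → ℕ → ℕ) (L : List Rule) (r : ℕ → ℕ)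
    (π : ℕ → ℕ → Term) (k : ℕ) : Set Atom :=
  substSet (safeSub ν (ruleAt L r k) (π k)) (ruleAt L r k).head

def derivState (ν : Rule → (ℕ → Term) → ℕ → ℕ) (L : List Rule) (I : Set Atom)
    (r : ℕ → ℕ) (π : ℕ → ℕ → Term) : ℕ → Set Atom
  | 0 => I
  | k + 1 => derivState ν L I r π k ∪ producedAt ν L r π k

/-- An `R`-derivation of length `n` from `I`: each step applies a trigger. -/
def IsDeriv (ν : Rule → (ℕ → Term) → ℕ → ℕ) (L : List Rule) (I : Set Atom) (n : ℕ)
    (r : ℕ → ℕ) (π : ℕ → ℕ → Term) : Prop :=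
  ∀ k < n, r k < L.length ∧ isHom (π k) (ruleAt L r k).body (derivState ν L I r π k)

/-- A pieceful derivation: each trigger maps its rule's frontier entirely into the terms of
the initial instance, or entirely into the terms produced by a single earlier application. -/
def PiecefulDeriv (ν : Rule → (ℕ → Term) → ℕ → ℕ) (L : List Rule) (I : Set Atom) (n : ℕ)
    (r : ℕ → ℕ) (π : ℕ → ℕ → Term) : Prop :=
  ∀ k < n, (∀ x ∈ (ruleAt L r k).frontier, π k x ∈ termsOf I) ∨
    ∃ j < k, ∀ x ∈ (ruleAt L r k).frontier, π k x ∈ termsOf (producedAt ν L r π j)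

/-- A pieceful rule set: every derivation from every instance is pieceful. -/
def PiecefulSet (L : List Rule) : Prop :=
  ∀ ν, SONaming L ν → ∀ I, IsInstance I → ∀ n r π,
    IsDeriv ν L I n r π → PiecefulDeriv ν L I n r π

/-- First-order structures for the semantics of rules. -/
structure Struct where
  D : Type
  nonempty : Nonempty D
  interp : ℕ → List D → Prop
  cinterp : ℕ → D

def evalT (M : Struct) (v : ℕ → M.D) : Term → M.D
  | .const c => M.cinterp c
  | .var x => v x

def holdsA (M : Struct) (v : ℕ → M.D) (a : Atom) : Prop :=
  M.interp a.pred (a.args.map (evalT M v))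

/-- Satisfaction of (the universal-existential closure of) a rule in a structure. -/
def satRule (M : Struct) (R : Rule) : Prop :=
  ∀ v : ℕ → M.D, (∀ a ∈ R.body, holdsA M v a) →
    ∃ w : ℕ → M.D, (∀ x ∈ varsOf R.body, w x = v x) ∧ ∀ a ∈ R.head, holdsA M w a

/-- Separating variables of `S' ⊆ S`: variables occurring both in `S'` and in `S \ S'`. -/
def sepVars (S' S : Set Atom) : Set ℕ := varsOf S' ∩ varsOf (S \ S')

/-- A piece-unifier `(S', H', u)` of a set of atoms `S` with a rule `R`. -/
def IsPieceUnifier (S : Set Atom) (R : Rule) (S' H' : Set Atom) (u : ℕ → Term) : Prop :=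
  Disjoint (varsOf S) (varsOf (R.body ∪ R.head)) ∧
  S'.Nonempty ∧ S' ⊆ S ∧ H' ⊆ R.head ∧
  (∀ x, x ∉ R.frontier ∪ varsOf S' → u x = Term.var x) ∧
  (∀ x ∈ R.frontier ∪ varsOf S', ∃ y ∈ varsOf R.head, u x = Term.var y) ∧
  (∀ x ∈ R.frontier, ∃ y ∈ R.frontier, u x = Term.var y) ∧
  (∀ x ∈ sepVars S' S, ∃ y ∈ R.frontier, u x = Term.var y) ∧
  substSet u S' = substSet u H'

/-- The existential stability property of a piece-unifier of `body R2` with `R1`. -/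
def StableUnifier (R2 R1 : Rule) (B2' : Set Atom) (u : ℕ → Term) : Prop :=
  (∀ x ∈ R2.frontier, u x ∉ Term.var '' R1.exist) ∨ R2.frontier ⊆ varsOf B2'

/-- The existential composition `R2 ∘_μ R1` w.r.t. a piece-unifier `μ = (B2', H1', u)`
of `body R2` with `R1`. -/
def compose (R2 R1 : Rule) (B2' : Set Atom) (u : ℕ → Term) : Rule :=
  if ∀ x ∈ R2.frontier, u x ∉ Term.var '' R1.exist then
    ⟨substSet u R1.body ∪ substSet u (R2.body \ B2'), substSet u R2.head⟩
  else
    ⟨substSet u R1.body ∪ substSet u (R2.body \ B2'),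
     substSet u R1.head ∪ substSet u R2.head⟩

/-- The closure `R*` of a rule set under existential composition. -/
inductive InClosure (𝒮 : Set Rule) : Rule → Prop
  | base {R : Rule} : R ∈ 𝒮 → InClosure 𝒮 R
  | comp {Ri Rj : Rule} {B' H' : Set Atom} {u : ℕ → Term} :
      InClosure 𝒮 Ri → InClosure 𝒮 Rj →
      IsPieceUnifier Ri.body Rj B' H' u → InClosure 𝒮 (compose Ri Rj B' u)

def ruleSet (L : List Rule) : Set Rule := {R | R ∈ L}

/-- The stability property for a (possibly infinite) rule set. -/
def StableSet (𝒮 : Set Rule) : Prop :=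
  ∀ R1 ∈ 𝒮, ∀ R2 ∈ 𝒮, ∀ B2' H1' u,
    IsPieceUnifier R2.body R1 B2' H1' u → StableUnifier R2 R1 B2' u

/-- `J` is a result of one breadth-first chase step of a (possibly infinite) rule set on `I`,
with fresh pairwise-compatible nulls (semi-oblivious naming). -/
def OneStepResult (𝒮 : Set Rule) (I J : Set Atom) : Prop :=
  ∃ ν : Rule → (ℕ → Term) → ℕ → ℕ,
    (∀ R ∈ 𝒮, ∀ f x, Term.var (ν R f x) ∉ termsOf I) ∧
    (∀ R ∈ 𝒮, ∀ R' ∈ 𝒮, ∀ f f' x x', ν R f x = ν R' f' x' →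
        R = R' ∧ restrict f R.frontier = restrict f' R'.frontier ∧ x = x') ∧
    J = I ∪ {a | ∃ R ∈ 𝒮, ∃ π : ℕ → Term, isHom π R.body I ∧
                  a ∈ substSet (safeSub ν R π) R.head}

/-- `I, R ⊨ q` for a Boolean conjunctive query `q` (a set of atoms). -/
def Entails (L : List Rule) (I q : Set Atom) : Prop :=
  ∀ ν, SONaming L ν → ∃ k σ, isHom σ q (chaseF ν L I k)

/-- The null `t` occurs in at least `n` atoms of `S`. -/
def occursInAtLeast (S : Set Atom) (t : Term) (n : ℕ) : Prop :=
  ∃ F : Set Atom, F ⊆ {a | a ∈ S ∧ t ∈ a.terms} ∧ F.Finite ∧ n ≤ F.ncard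

def FrontierGuarded (R : Rule) : Prop := ∃ a ∈ R.body, R.frontier ⊆ a.vars

def IsDatalog (R : Rule) : Prop := R.exist = ∅ ∧ ∃ a, R.head = {a}

end ER

/-! Two distinct pieces share no existential variable, so the witnesses that the single-piece
rules provide for a common body assignment agree wherever they overlap and glue into one
witness for the whole head. -/

namespace ER

theorem exists_extension_of_agree {ι α β : Type*} (v : α → β) (X : Set α) (V : ι → Set α)
    (W : ι → α → β) (hW : ∀ i, ∀ x ∈ X, W i x = v x)
    (hV : ∀ i j, ∀ x ∈ V i ∩ V j, x ∉ X → i = j) :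
    ∃ w : α → β, (∀ x ∈ X, w x = v x) ∧ ∀ i, ∀ x ∈ V i, w x = W i x := by
  refine ⟨fun x => if h : ∃ i, x ∈ V i then W h.choose x else v x, ?_, ?_⟩
  · intro x hx
    dsimp only
    split_ifs
    exacts [hW _ x hx, rfl]
  · intro i x hx
    have h : ∃ i, x ∈ V i := ⟨i, hx⟩
    simp only [dif_pos h]
    by_cases hxX : x ∈ X
    · rw [hW _ x hxX, hW i x hxX]
    · rw [hV _ i x ⟨h.choose_spec, hx⟩ hxX]

namespace IsPiece

variable {S : Set Atom} {T : Set Term} {P Q : Set Atom}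

theorem eq_of_linked (hP : IsPiece S T P) (hQ : IsPiece S T Q) {a b : Atom}
    (ha : a ∈ P) (hb : b ∈ Q) (hab : linked T a b) : P = Q := by
  obtain ⟨t, ht, hta, htb⟩ := hab
  have hbP : b ∈ P := hP.2.2.1 b (hQ.2.1 hb) a ha ⟨t, ht, htb, hta⟩
  have hclosed : closedIn S T (P ∩ Q) := fun c hc d hd hcd =>
    ⟨hP.2.2.1 c hc d hd.1 hcd, hQ.2.2.1 c hc d hd.2 hcd⟩
  have hne : (P ∩ Q).Nonempty := ⟨b, hbP, hb⟩
  exact (hP.2.2.2 _ Set.inter_subset_left hne hclosed).symm.trans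
    (hQ.2.2.2 _ Set.inter_subset_right hne hclosed)

theorem eq_of_mem_varsOf {R : Rule} (hP : IsPiece R.head (Term.var '' R.exist) P)
    (hQ : IsPiece R.head (Term.var '' R.exist) Q) {x : ℕ} (hxP : x ∈ varsOf P)
    (hxQ : x ∈ varsOf Q) (hx : x ∉ varsOf R.body) : P = Q := by
  simp only [varsOf, Set.mem_iUnion] at hxP hxQ
  obtain ⟨a, ha, hxa⟩ := hxP
  obtain ⟨b, hb, hxb⟩ := hxQ
  have hexist : x ∈ R.exist :=
    ⟨Set.mem_biUnion (hP.2.1 ha) hxa, hx⟩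
  exact hP.eq_of_linked hQ ha hb ⟨_, ⟨x, hexist, rfl⟩, hxa, hxb⟩

end IsPiece

theorem holdsA_of_eqOn {M : Struct} {v w : ℕ → M.D} {a : Atom}
    (hvw : ∀ x ∈ a.vars, v x = w x) (ha : holdsA M v a) : holdsA M w a := by
  have heval : ∀ t ∈ a.args, evalT M v t = evalT M w t := by
    rintro (c | x) ht
    · rfl
    · exact hvw x ht
  rwa [holdsA, List.map_congr_left heval] at ha

theorem satRule_of_head_subset {M : Struct} {B H H' : Set Atom}
    (h : satRule M ⟨B, H⟩) (hH : H' ⊆ H) : satRule M ⟨B, H'⟩ := fun v hv =>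
  (h v hv).imp fun _ hw => ⟨hw.1, fun a ha => hw.2 a (hH ha)⟩

theorem satRule_sUnion_head {M : Struct} {B : Set Atom} {Ps : Set (Set Atom)}
    (hPs : ∀ P ∈ Ps, ∀ Q ∈ Ps, ∀ x ∈ varsOf P ∩ varsOf Q, x ∉ varsOf B → P = Q)
    (h : ∀ P ∈ Ps, satRule M ⟨B, P⟩) : satRule M ⟨B, ⋃₀ Ps⟩ := by
  intro v hv
  choose W hWB hWP using fun P : Ps => h P P.2 v hv
  obtain ⟨w, hwB, hwP⟩ := exists_extension_of_agree v (varsOf B) (fun P : Ps => varsOf P) W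
    hWB fun P Q x hx hxB => Subtype.ext (hPs P P.2 Q Q.2 x hx hxB)
  refine ⟨w, hwB, ?_⟩
  rintro a ⟨P, hP, ha⟩
  exact holdsA_of_eqOn (fun x hx => (hwP ⟨P, hP⟩ x (Set.mem_biUnion ha hx)).symm)
    (hWP ⟨P, hP⟩ a ha)

theorem rule_decomposition_general (R : Rule) (Ps : Set (Set Atom))
    (hpieces : ∀ P ∈ Ps, IsPiece R.head (Term.var '' R.exist) P)
    (hcover : ⋃₀ Ps = R.head) :
    ∀ M : Struct, (satRule M R ↔ ∀ P ∈ Ps, satRule M ⟨R.body, P⟩) := by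
  intro M
  constructor
  · exact fun h P hP => satRule_of_head_subset h (hpieces P hP).2.1
  · intro h
    have hPs : ∀ P ∈ Ps, ∀ Q ∈ Ps, ∀ x ∈ varsOf P ∩ varsOf Q, x ∉ varsOf R.body → P = Q :=
      fun P hP Q hQ x hx hxB => (hpieces P hP).eq_of_mem_varsOf (hpieces Q hQ) hx.1 hx.2 hxB
    simpa only [hcover] using satRule_sUnion_head hPs h

/-- a rule is logically equivalent to the conjunction of the single-piece rules
obtained by restricting its head to each piece w.r.t. its existential variables. -/
theorem rule_decomposition (R : Rule) (hR : WfRule R) (Ps : Set (Set Atom))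
    (hpieces : ∀ P ∈ Ps, IsPiece R.head (Term.var '' R.exist) P)
    (hcover : ⋃₀ Ps = R.head) :
    ∀ M : Struct, (satRule M R ↔ ∀ P ∈ Ps, satRule M ⟨R.body, P⟩) :=
  rule_decomposition_general R Ps hpieces hcover

end ER
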